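/- arXiv:1106.0719 — 2 statements merged into one kernel-verified Lean document; each statement's English description precedes it below -/
import Mathlib

section
/- The intertwining relation L ∘ R^♯ = R^♯ ∘ J holds: for any nonnegative measurable f on ℝ^d and any x = (x'', x_{d-1}, x_d) ∈ ℝ^{d-2} × ℝ × ℝ, R^♯f(x'', x_d, x_{d-1}) = R^♯(Jf)(x'', x_{d-1}, x_d). -/
open MeasureTheory
open scoped ENNReal

/-- `R♯ f (x) = ∫_{ℝ^{d-1}} f(y', x_d + y'·x') dy'` for nonnegative measurable `f`,
with `ℝ^d = ℝ^{d-2} × ℝ × ℝ`, `x = (x'', x_{d-1}, x_d)`, `x' = (x'', x_{d-1})`. -/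
noncomputable def Rsharp (d : ℕ) (f : EuclideanSpace ℝ (Fin (d-2)) × ℝ × ℝ → ℝ≥0∞) :
    EuclideanSpace ℝ (Fin (d-2)) × ℝ × ℝ → ℝ≥0∞ := fun x =>
  ∫⁻ y' : EuclideanSpace ℝ (Fin (d-2)) × ℝ,
    f (y'.1, y'.2, x.2.2 + (inner ℝ y'.1 x.1 + y'.2 * x.2.1))

/-- `J f (u,s,t) = |s|^{-d} f(s⁻¹u, s⁻¹, s⁻¹t)` for `s ≠ 0`. -/
noncomputable def Jnn (d : ℕ) (f : EuclideanSpace ℝ (Fin (d-2)) × ℝ × ℝ → ℝ≥0∞) :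
    EuclideanSpace ℝ (Fin (d-2)) × ℝ × ℝ → ℝ≥0∞ := fun p =>
  if p.2.1 = 0 then 0 else
    ENNReal.ofReal (|p.2.1|⁻¹ ^ d) * f (p.2.1⁻¹ • p.1, p.2.1⁻¹, p.2.1⁻¹ * p.2.2)

/-!
Write `y' = (z, s)` with `z ∈ ℝ^{d-2}` and integrate over `z` first. For `s ≠ 0` the substitution
`z ↦ s⁻¹ z` (Jacobian `|s|^{d-2}`, which absorbs all but two of the `d` factors `|s|⁻¹` in `J`)
turns the inner integral of `J f` at `s` into `s⁻²` times the inner integral of `f` at `s⁻¹`.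
The substitution `s ↦ s⁻¹`, of Jacobian `s⁻²`, then identifies the outer integrals.
-/

namespace MeasureTheory.Measure

lemma lintegral_comp_smul {E : Type*} [NormedAddCommGroup E] [NormedSpace ℝ E]
    [MeasurableSpace E] [BorelSpace E] [FiniteDimensional ℝ E] (μ : Measure E) [μ.IsAddHaarMeasure]
    (g : E → ℝ≥0∞) {c : ℝ} (hc : c ≠ 0) :
    ∫⁻ z, g (c • z) ∂μ = ENNReal.ofReal (|c| ^ Module.finrank ℝ E)⁻¹ * ∫⁻ z, g z ∂μ := by
  have hmap := lintegral_map_equiv g (MeasurableEquiv.smul₀ c hc) (μ := μ)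
  rw [MeasurableEquiv.coe_smul₀, map_addHaar_smul μ hc, lintegral_smul_measure] at hmap
  rw [← hmap, smul_eq_mul, abs_inv, abs_pow]

end MeasureTheory.Measure

lemma lintegral_inv_sq_mul_comp_inv (G : ℝ → ℝ≥0∞) :
    ∫⁻ s, ENNReal.ofReal (s ^ 2)⁻¹ * G s⁻¹ = ∫⁻ t, G t := by
  have hS : MeasurableSet ({0}ᶜ : Set ℝ) := (measurableSet_singleton 0).compl
  have hder : ∀ s ∈ ({0}ᶜ : Set ℝ), HasFDerivWithinAt (fun s : ℝ => s⁻¹)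
      ((1 : ℝ →L[ℝ] ℝ).smulRight (-(s ^ 2)⁻¹)) {0}ᶜ s := fun s hs =>
    (hasDerivAt_inv hs).hasDerivWithinAt.hasFDerivWithinAt
  have hcv := lintegral_image_eq_lintegral_abs_det_fderiv_mul volume hS hder inv_injective.injOn G
  simp only [Set.image_inv_eq_inv, Set.compl_inv, Set.inv_singleton, inv_zero,
    restrict_compl_singleton, ContinuousLinearMap.det_smulRight, one_apply_eq_self, one_mul,
    abs_neg, abs_inv, abs_pow, sq_abs] at hcv
  exact hcv.symm

lemma measurable_Jnn {d : ℕ} {f : EuclideanSpace ℝ (Fin (d-2)) × ℝ × ℝ → ℝ≥0∞}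
    (hf : Measurable f) : Measurable (Jnn d f) := by
  unfold Jnn
  refine Measurable.ite (measurableSet_eq_fun (by fun_prop) measurable_const) measurable_const ?_
  fun_prop

lemma Jnn_apply_of_ne_zero (d : ℕ) (f : EuclideanSpace ℝ (Fin (d-2)) × ℝ × ℝ → ℝ≥0∞)
    (u : EuclideanSpace ℝ (Fin (d-2))) {s : ℝ} (t : ℝ) (hs : s ≠ 0) :
    Jnn d f (u, s, t) = ENNReal.ofReal (|s|⁻¹ ^ d) * f (s⁻¹ • u, s⁻¹, s⁻¹ * t) := if_neg hs

lemma Rsharp_eq_lintegral_lintegral {d : ℕ} {f : EuclideanSpace ℝ (Fin (d-2)) × ℝ × ℝ → ℝ≥0∞}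
    (hf : Measurable f) (x'' : EuclideanSpace ℝ (Fin (d-2))) (a b : ℝ) :
    Rsharp d f (x'', a, b) = ∫⁻ t, ∫⁻ z, f (z, t, b + (inner ℝ z x'' + t * a)) := by
  rw [Rsharp, Measure.volume_eq_prod]
  exact lintegral_prod_symm' _ (by fun_prop)

lemma lintegral_Jnn_slice {d : ℕ} (hd : 2 ≤ d) (f : EuclideanSpace ℝ (Fin (d-2)) × ℝ × ℝ → ℝ≥0∞)
    (x'' : EuclideanSpace ℝ (Fin (d-2))) (a b : ℝ) {s : ℝ} (hs : s ≠ 0) :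
    ∫⁻ z, Jnn d f (z, s, b + (inner ℝ z x'' + s * a))
      = ENNReal.ofReal (s ^ 2)⁻¹ * ∫⁻ z, f (z, s⁻¹, a + (inner ℝ z x'' + s⁻¹ * b)) := by
  have hpow : |s|⁻¹ ^ d * (|s⁻¹| ^ (d - 2))⁻¹ = (s ^ 2)⁻¹ := by
    rw [← Nat.sub_add_cancel hd, pow_add, Nat.add_sub_cancel, abs_inv, inv_pow, inv_pow, inv_inv,
      sq_abs]
    field_simp
  calc ∫⁻ z, Jnn d f (z, s, b + (inner ℝ z x'' + s * a))
      = ∫⁻ z, ENNReal.ofReal (|s|⁻¹ ^ d) *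
          f (s⁻¹ • z, s⁻¹, a + (inner ℝ (s⁻¹ • z) x'' + s⁻¹ * b)) := by
        refine lintegral_congr fun z => ?_
        rw [Jnn_apply_of_ne_zero _ _ _ _ hs, real_inner_smul_left]
        congr 4
        field_simp
        ring
    _ = ENNReal.ofReal (|s|⁻¹ ^ d) * (ENNReal.ofReal (|s⁻¹| ^ (d - 2))⁻¹ *
          ∫⁻ z, f (z, s⁻¹, a + (inner ℝ z x'' + s⁻¹ * b))) := by
        rw [lintegral_const_mul' _ _ ENNReal.ofReal_ne_top,
          Measure.lintegral_comp_smul _ (fun z => f (z, s⁻¹, a + (inner ℝ z x'' + s⁻¹ * b)))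
            (inv_ne_zero hs), finrank_euclideanSpace_fin]
    _ = _ := by rw [← mul_assoc, ← ENNReal.ofReal_mul (by positivity), hpow]

/-- The intertwining relation `L ∘ R♯ = R♯ ∘ J`. -/
theorem stmt3 (d : ℕ) (hd : 2 ≤ d)
    (f : EuclideanSpace ℝ (Fin (d-2)) × ℝ × ℝ → ℝ≥0∞) (hf : Measurable f)
    (x'' : EuclideanSpace ℝ (Fin (d-2))) (xdm1 xd : ℝ) :
    Rsharp d f (x'', xd, xdm1) = Rsharp d (Jnn d f) (x'', xdm1, xd) := by
  rw [Rsharp_eq_lintegral_lintegral hf, Rsharp_eq_lintegral_lintegral (measurable_Jnn hf),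
    ← lintegral_inv_sq_mul_comp_inv]
  refine lintegral_congr_ae ?_
  filter_upwards [Measure.ae_ne volume 0] with s hs
  exact (lintegral_Jnn_slice hd f x'' xdm1 xd hs).symm
end

section
/- Let F: ℝ → ℝ be continuous, nonnegative, tending to 0 at ±∞, and let E(s) = {t : F(t) > s}. If for some 0 < ρ < s ≤ sup F the measures |E(ρ)| and |E(s)| are equal and finite, with |{t : F(t) = s}| = 0, then a contradiction arises; equivalently: for every s with 0 < s < sup F and |{t : F(t) = s}| = 0 and every ε > 0, the set {r ∈ (0,s) : |E(s)| < |E(r)| < |E(s)| + ε} has positive Lebesgue measure. -/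
/-!
Write `m r = |{F > r}|`. Since the level set `{F = s}` is null, `m r = m s + |{r < F < s}|`
for `r < s`. The last term is positive, because `{r < F < s}` is a nonempty open set by the
intermediate value theorem, and it tends to `0` as `r → s⁻` by continuity of measure from above,
all these sets having finite measure since `F` vanishes at infinity. Hence every `r` in some
interval `(r₀, s)` belongs to the set in question.
-/

open MeasureTheory Filter Topology Set
open scoped ENNReal

theorem measure_setOf_lt_lt_top_of_tendsto_cocompact {X : Type*} [TopologicalSpace X]
    [MeasurableSpace X] {μ : Measure X} [IsFiniteMeasureOnCompacts μ] {f : X → ℝ}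
    (hf : Tendsto f (cocompact X) (𝓝 0)) {r : ℝ} (hr : 0 < r) :
    μ {x | r < f x} < ∞ := by
  obtain ⟨K, hK, hKf⟩ := mem_cocompact.1 (hf.eventually_lt_const hr)
  refine (measure_mono fun x hx => ?_).trans_lt hK.measure_lt_top
  by_contra hxK
  exact lt_asymm (show r < f x from hx) (hKf hxK)

theorem measure_setOf_lt_and_lt_pos {X : Type*} [TopologicalSpace X] [PreconnectedSpace X]
    [MeasurableSpace X] (μ : Measure X) [μ.IsOpenPosMeasure] {f : X → ℝ} (hf : Continuous f)
    {a b : X} {r s : ℝ} (ha : f a ≤ r) (hrs : r < s) (hb : s ≤ f b) :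
    0 < μ {x | r < f x ∧ f x < s} := by
  obtain ⟨x, hx⟩ : (r + s) / 2 ∈ range f :=
    intermediate_value_univ a b hf ⟨by linarith, by linarith⟩
  exact ((isOpen_lt continuous_const hf).inter (isOpen_lt hf continuous_const)).measure_pos μ
    ⟨x, show r < f x by linarith, show f x < s by linarith⟩

theorem measure_setOf_lt_eq_add {α : Type*} [MeasurableSpace α] {μ : Measure α} {f : α → ℝ}
    (hf : Measurable f) {r s : ℝ} (hrs : r < s) (hs : μ {x | f x = s} = 0) :
    μ {x | r < f x} = μ {x | s < f x} + μ {x | r < f x ∧ f x < s} := by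
  have hsplit : {x | r < f x} = ({x | s < f x} ∪ {x | f x = s}) ∪ {x | r < f x ∧ f x < s} := by
    ext x
    simp only [mem_union, mem_ofPred_eq]
    constructor
    · intro h
      rcases lt_trichotomy (f x) s with h' | h' | h' <;> tauto
    · rintro ((h | h) | ⟨h, -⟩) <;> linarith
  have hdisj₁ : Disjoint {x | s < f x} {x | f x = s} :=
    disjoint_left.2 fun x h h' => (show s < f x from h).ne' h'
  have hdisj₂ : Disjoint ({x | s < f x} ∪ {x | f x = s}) {x | r < f x ∧ f x < s} := by
    refine disjoint_left.2 fun x h h' => ?_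
    rcases h with h | h
    · exact lt_asymm (show s < f x from h) h'.2
    · exact (show f x < s from h'.2).ne h
  rw [hsplit, measure_union hdisj₂ ((measurableSet_lt measurable_const hf).inter
    (measurableSet_lt hf measurable_const)), measure_union hdisj₁
    (measurableSet_eq_fun hf measurable_const), hs, add_zero]

theorem tendsto_measure_setOf_lt_and_lt_nhdsLT {α : Type*} [MeasurableSpace α]
    {μ : Measure α} {f : α → ℝ} (hf : Measurable f) {s : ℝ}
    (hfin : ∃ r < s, μ {x | r < f x ∧ f x < s} ≠ ∞) :
    Tendsto (fun r => μ {x | r < f x ∧ f x < s}) (𝓝[<] s) (𝓝 0) := by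
  -- continuity from above, in the order dual so that `𝓝[>]` becomes `𝓝[<]`
  have h := tendsto_measure_biInter_gt (μ := μ) (ι := ℝᵒᵈ) (a := OrderDual.toDual s)
    (s := fun r => {x | OrderDual.ofDual r < f x ∧ f x < s})
    (fun r _ => (measurableSet_lt measurable_const hf |>.inter
      (measurableSet_lt hf measurable_const)).nullMeasurableSet)
    (fun _ _ _ hij _ hx => ⟨lt_of_le_of_lt (α := ℝ) hij hx.1, hx.2⟩) hfin
  have hempty : ⋂ r > OrderDual.toDual s, {x | OrderDual.ofDual r < f x ∧ f x < s} = ∅ := by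
    refine eq_empty_of_forall_notMem fun x hx => ?_
    obtain ⟨r, hrs, -⟩ := hfin
    have hxs : f x < s := (mem_iInter₂.1 hx (OrderDual.toDual r) hrs).2
    exact lt_irrefl _ (mem_iInter₂.1 hx (OrderDual.toDual (f x)) hxs).1
  rw [hempty, measure_empty] at h
  exact h

theorem measure_pos_of_mem_nhdsLT {α : Type*} [LinearOrder α] [TopologicalSpace α]
    [OrderTopology α] [DenselyOrdered α] [NoMinOrder α] [MeasurableSpace α] {μ : Measure α}
    [μ.IsOpenPosMeasure] {S : Set α} {a : α} (hS : S ∈ 𝓝[<] a) : 0 < μ S := by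
  obtain ⟨l, hl, hlS⟩ := mem_nhdsLT_iff_exists_Ioo_subset.1 hS
  exact (isOpen_Ioo.measure_pos μ (nonempty_Ioo.2 hl)).trans_le (measure_mono hlS)

theorem stmt19_general (F : ℝ → ℝ) (hcont : Continuous F)
    (htop : Filter.Tendsto F Filter.atTop (nhds 0))
    (hbot : Filter.Tendsto F Filter.atBot (nhds 0))
    (s : ℝ) (hs : 0 < s) (hsup : ∃ t, s < F t)
    (hlevel : volume {t : ℝ | F t = s} = 0)
    (ε : ℝ) (hε : 0 < ε) :
    0 < volume {r ∈ Set.Ioo 0 s |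
      volume {t : ℝ | s < F t} < volume {t : ℝ | r < F t} ∧
      volume {t : ℝ | r < F t} < volume {t : ℝ | s < F t} + ENNReal.ofReal ε} := by
  have hfin : ∀ r > 0, volume {t | r < F t} ≠ ∞ := fun r hr =>
    (measure_setOf_lt_lt_top_of_tendsto_cocompact
      (by rw [cocompact_eq_atBot_atTop]; exact hbot.sup htop) hr).ne
  obtain ⟨b, hb⟩ := hsup
  have hmid_pos : ∀ r ∈ Ioo 0 s, 0 < volume {t | r < F t ∧ F t < s} := fun r hr =>
    have ⟨a, ha⟩ := (htop.eventually (ge_mem_nhds hr.1)).exists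
    measure_setOf_lt_and_lt_pos volume hcont ha hr.2 hb.le
  have hmid_lim : Tendsto (fun r => volume {t | r < F t ∧ F t < s}) (𝓝[<] s) (𝓝 0) :=
    tendsto_measure_setOf_lt_and_lt_nhdsLT hcont.measurable ⟨s / 2, by linarith,
      ne_top_of_le_ne_top (hfin (s / 2) (by linarith)) (measure_mono fun _ ht => ht.1)⟩
  refine measure_pos_of_mem_nhdsLT (a := s) ?_
  filter_upwards [Ioo_mem_nhdsLT hs, hmid_lim.eventually_lt_const (ENNReal.ofReal_pos.2 hε)]
    with r hr hrε
  rw [measure_setOf_lt_eq_add hcont.measurable hr.2 hlevel]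
  exact ⟨hr, ENNReal.lt_add_right (hfin s hs) (hmid_pos r hr).ne',
    ENNReal.add_lt_add_left (hfin s hs) hrε⟩

/-- Let `F : ℝ → [0,∞)` be continuous with `F → 0` at `±∞`, and `E(s) = {t : F t > s}`.
For every `s` with `0 < s < sup F` whose level set `{F = s}` is null, and every
`ε > 0`, the set `{r ∈ (0,s) : |E(s)| < |E(r)| < |E(s)| + ε}` has positive measure. -/
theorem stmt19 (F : ℝ → ℝ) (hcont : Continuous F) (hnonneg : ∀ t, 0 ≤ F t)
    (htop : Filter.Tendsto F Filter.atTop (nhds 0))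
    (hbot : Filter.Tendsto F Filter.atBot (nhds 0))
    (s : ℝ) (hs : 0 < s) (hsup : ∃ t, s < F t)
    (hlevel : volume {t : ℝ | F t = s} = 0)
    (ε : ℝ) (hε : 0 < ε) :
    0 < volume {r ∈ Set.Ioo 0 s |
      volume {t : ℝ | s < F t} < volume {t : ℝ | r < F t} ∧
      volume {t : ℝ | r < F t} < volume {t : ℝ | s < F t} + ENNReal.ofReal ε} :=
  stmt19_general F hcont htop hbot s hs hsup hlevel ε hε
end
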